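/- arXiv:2203.08585 — 3 statements merged into one kernel-verified Lean document; each statement's English description precedes it below -/
import Mathlib

section
/- For every real number r ≥ 0 and every α with 0 ≤ α ≤ 1, one has cosh r − 1 ≤ r^{2α} · cosh r, where r^{2α} denotes the real power. In particular (the case α = 1, valid for all real r), cosh r − 1 ≤ r² · cosh r. -/
/-!
For `r ≥ 0`, the bounds `cosh r - 1 ≤ r * sinh r` and `sinh r ≤ r * cosh r` are the mean value
inequality for `cosh` and `sinh` on `[0, r]`, whose derivatives `sinh` and `cosh` are largest at `r`.
Chaining them gives `cosh r - 1 ≤ r ^ 2 * cosh r`, and together with the trivial bound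
`cosh r - 1 ≤ cosh r` this gives `cosh r - 1 ≤ min 1 (r ^ 2) * cosh r ≤ r ^ (2 * α) * cosh r`.
-/

open Real Set

theorem Real.min_one_rpow_le_rpow {r p q : ℝ} (hr : 0 ≤ r) (hq : 0 ≤ q) (hqp : q ≤ p) :
    min 1 (r ^ p) ≤ r ^ q := by
  rcases le_total 1 r with h1 | h1
  · exact (min_le_left _ _).trans (one_le_rpow h1 hq)
  · exact (min_le_right _ _).trans (rpow_le_rpow_of_exponent_ge' hr h1 hq hqp)

theorem Real.cosh_sub_one_le_mul_sinh {r : ℝ} (hr : 0 ≤ r) : cosh r - 1 ≤ r * sinh r := by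
  have h := (convex_Icc 0 r).image_sub_le_mul_sub_of_deriv_le continuous_cosh.continuousOn
    differentiable_cosh.differentiableOn (C := sinh r) (fun x hx => ?_) 0 ⟨le_rfl, hr⟩ r
    ⟨hr, le_rfl⟩ hr
  · rw [cosh_zero, sub_zero] at h
    linarith
  · rw [interior_Icc] at hx
    rw [Real.deriv_cosh, sinh_le_sinh]
    exact hx.2.le

theorem Real.sinh_le_mul_cosh {r : ℝ} (hr : 0 ≤ r) : sinh r ≤ r * cosh r := by
  have h := (convex_Icc 0 r).image_sub_le_mul_sub_of_deriv_le continuous_sinh.continuousOn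
    differentiable_sinh.differentiableOn (C := cosh r) (fun x hx => ?_) 0 ⟨le_rfl, hr⟩ r
    ⟨hr, le_rfl⟩ hr
  · rw [sinh_zero, sub_zero, sub_zero] at h
    linarith
  · rw [interior_Icc] at hx
    rw [Real.deriv_sinh, cosh_le_cosh, abs_of_pos hx.1, abs_of_nonneg hr]
    exact hx.2.le

theorem Real.cosh_sub_one_le_sq_mul_cosh (r : ℝ) : cosh r - 1 ≤ r ^ 2 * cosh r := by
  wlog hr : 0 ≤ r
  · simpa using this (-r) (by linarith)
  calc cosh r - 1 ≤ r * sinh r := cosh_sub_one_le_mul_sinh hr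
    _ ≤ r * (r * cosh r) := mul_le_mul_of_nonneg_left (sinh_le_mul_cosh hr) hr
    _ = r ^ 2 * cosh r := by ring

theorem Real.cosh_sub_one_le_min_one_sq_mul_cosh (r : ℝ) :
    cosh r - 1 ≤ min 1 (r ^ 2) * cosh r := by
  rw [min_mul_of_nonneg _ _ (cosh_pos r).le, one_mul]
  exact le_min (by linarith) (cosh_sub_one_le_sq_mul_cosh r)

/-- For every real `r ≥ 0` and every `α` with `0 ≤ α ≤ 1`, one has
`cosh r − 1 ≤ r ^ (2α) * cosh r` (real power); in particular (the case `α = 1`,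
valid for all real `r`), `cosh r − 1 ≤ r ^ 2 * cosh r`. -/
theorem cosh_sub_one_le_rpow_mul_cosh :
    (∀ r α : ℝ, 0 ≤ r → 0 ≤ α → α ≤ 1 →
      Real.cosh r - 1 ≤ r ^ (2 * α) * Real.cosh r) ∧
    (∀ r : ℝ, Real.cosh r - 1 ≤ r ^ 2 * Real.cosh r) := by
  refine ⟨fun r α hr hα hα1 => ?_, cosh_sub_one_le_sq_mul_cosh⟩
  calc cosh r - 1 ≤ min 1 (r ^ (2 : ℝ)) * cosh r := by
        rw [rpow_two]
        exact cosh_sub_one_le_min_one_sq_mul_cosh r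
    _ ≤ r ^ (2 * α) * cosh r := by
        gcongr
        exact min_one_rpow_le_rpow hr (by positivity) (by linarith)
end

section
/- For all real numbers a and b, |cosh b − cosh a| ≤ (1/2) · |b² − a²| · (cosh b + cosh a). -/
/-!
Writing `b = u + v`, `a = u - v`, one has `cosh b - cosh a = 2 sinh u sinh v`,
`cosh b + cosh a = 2 cosh u cosh v` and `b² - a² = 4uv`. The inequality, even with constant `1/4`,
therefore reduces to `|sinh x| ≤ |x| cosh x`, which is the mean value theorem for `sinh` combined
with the monotonicity of `cosh` on `[0, ∞)`.
-/

namespace Real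

theorem sinh_le_mul_cosh_s5 {x : ℝ} (hx : 0 ≤ x) : sinh x ≤ x * cosh x := by
  rcases hx.eq_or_lt with rfl | hx
  · simp
  obtain ⟨c, ⟨hc0, hcx⟩, hslope⟩ := exists_hasDerivAt_eq_slope sinh cosh hx
    continuous_sinh.continuousOn fun t _ => hasDerivAt_sinh t
  have hcosh : cosh c ≤ cosh x := cosh_le_cosh.mpr <| by
    rw [abs_of_pos hc0, abs_of_pos hx]; exact hcx.le
  rw [sinh_zero, sub_zero, sub_zero, eq_div_iff hx.ne'] at hslope
  nlinarith

theorem abs_sinh_le_abs_mul_cosh (x : ℝ) : |sinh x| ≤ |x| * cosh x := by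
  simpa only [abs_sinh, cosh_abs] using sinh_le_mul_cosh_s5 (abs_nonneg x)

theorem abs_cosh_sub_cosh_le_quarter (a b : ℝ) :
    |cosh b - cosh a| ≤ (1 / 4) * |b ^ 2 - a ^ 2| * (cosh b + cosh a) := by
  obtain ⟨u, v, rfl, rfl⟩ : ∃ u v : ℝ, b = u + v ∧ a = u - v :=
    ⟨(b + a) / 2, (b - a) / 2, by ring, by ring⟩
  have hsub : cosh (u + v) - cosh (u - v) = 2 * sinh u * sinh v := by
    rw [cosh_add, cosh_sub]; ring
  have hadd : cosh (u + v) + cosh (u - v) = 2 * cosh u * cosh v := by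
    rw [cosh_add, cosh_sub]; ring
  have hsq : (u + v) ^ 2 - (u - v) ^ 2 = 4 * (u * v) := by ring
  calc |cosh (u + v) - cosh (u - v)| = 2 * (|sinh u| * |sinh v|) := by
        rw [hsub, abs_mul, abs_mul, abs_two, mul_assoc]
    _ ≤ 2 * ((|u| * cosh u) * (|v| * cosh v)) := by
        gcongr
        exacts [abs_sinh_le_abs_mul_cosh u, abs_sinh_le_abs_mul_cosh v]
    _ = (1 / 4) * |(u + v) ^ 2 - (u - v) ^ 2| * (cosh (u + v) + cosh (u - v)) := by
        rw [hadd, hsq, abs_mul, abs_mul, abs_of_pos (four_pos : (0 : ℝ) < 4)]; ring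

end Real

/-- For all real `a`, `b`:  `|cosh b − cosh a| ≤ (1/2) * |b² − a²| * (cosh b + cosh a)`. -/
theorem abs_cosh_sub_cosh_le (a b : ℝ) :
    |Real.cosh b - Real.cosh a| ≤ (1 / 2) * |b ^ 2 - a ^ 2| * (Real.cosh b + Real.cosh a) := by
  refine (Real.abs_cosh_sub_cosh_le_quarter a b).trans ?_
  have := Real.cosh_pos a
  have := Real.cosh_pos b
  gcongr
  norm_num
end

section
/- Let n ≥ 1 and p ≥ 1 be integers, let σ ≥ 0, and let U be a complex-valued Schwartz function on ℝⁿ with Û = 𝓕U. Let W be the inverse Fourier transform of ξ ↦ e^{−σ|ξ|} Û(ξ). Then, as values in [0, ∞], ‖ ξ ↦ e^{σ|ξ|} · 𝓕(W^p)(ξ) ‖_{L²(ℝⁿ)} ≤ ‖ |Û| ∗ |Û| ∗ ⋯ ∗ |Û| ‖_{L²(ℝⁿ)}, where the right-hand side is the L² norm of the p-fold convolution of the function ξ ↦ |Û(ξ)| with itself. -/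
/-!
The weight `v ξ = e^{σ|ξ|}` is submultiplicative by the triangle inequality, hence
`v · |g₁ ⋆ g₂| ≤ (v |g₁|) ⋆ (v |g₂|)`. With `g = e^{-σ|·|} Û` we have `v |g| = |Û|` and
`W^p = 𝓕⁻¹(g ⋆ ⋯ ⋆ g)`, so Fourier inversion gives `v |𝓕(W^p)| ≤ |Û| ⋆ ⋯ ⋆ |Û|` pointwise.
If `W^p` is not integrable, its Fourier transform is `0` by Mathlib's convention for the Bochner
integral, and the inequality is trivial.
-/

open MeasureTheory

/-- The `p`-fold self-convolution of `f : ℝⁿ → ℝ`: `iteratedSelfConv f k` is the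
`(k+1)`-fold convolution `f ⋆ f ⋆ ⋯ ⋆ f` (so `k = p − 1` gives the `p`-fold one). -/
noncomputable def iteratedSelfConv {n : ℕ} (f : EuclideanSpace ℝ (Fin n) → ℝ) :
    ℕ → EuclideanSpace ℝ (Fin n) → ℝ
  | 0 => f
  | k + 1 => MeasureTheory.convolution f (iteratedSelfConv f k)
      (ContinuousLinearMap.mul ℝ ℝ) volume

open Set ContinuousLinearMap
open scoped Convolution FourierTransform

section Convolution

variable {𝕜 G E E' F : Type*} [RCLike 𝕜] [NormedAddCommGroup G] [MeasurableSpace G]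
  {μ : Measure G} [NormedAddCommGroup E] [NormedAddCommGroup E'] [NormedAddCommGroup F]
  [NormedSpace 𝕜 E] [NormedSpace 𝕜 E'] [NormedSpace 𝕜 F] (L : E →L[𝕜] E' →L[𝕜] F)

theorem bddAbove_range_norm_convolution [NormedSpace ℝ F] {f : G → E} {g : G → E'}
    (hf : Integrable f μ) (hg : BddAbove (range fun x => ‖g x‖)) :
    BddAbove (range fun x => ‖(f ⋆[L, μ] g) x‖) := by
  obtain ⟨C, hC⟩ := hg
  refine ⟨‖L‖ * C * ∫ t, ‖f t‖ ∂μ, ?_⟩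
  rintro _ ⟨x, rfl⟩
  rw [← integral_const_mul]
  refine norm_integral_le_of_norm_le (hf.norm.const_mul _) (.of_forall fun t => ?_)
  calc ‖L (f t) (g (x - t))‖ ≤ ‖L‖ * ‖f t‖ * ‖g (x - t)‖ := L.le_opNorm₂ _ _
    _ ≤ ‖L‖ * ‖f t‖ * C := by gcongr; exact hC ⟨x - t, rfl⟩
    _ = ‖L‖ * C * ‖f t‖ := by ring

theorem MeasureTheory.Integrable.convolutionExistsAt_of_bddAbove [BorelSpace G]
    [SecondCountableTopology G] [SFinite μ] [μ.IsAddLeftInvariant] {f : G → E} {g : G → E'}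
    (hf : Integrable f μ) (hg : BddAbove (range fun x => ‖g x‖))
    (hgm : AEStronglyMeasurable g μ) (x : G) : ConvolutionExistsAt f g x L μ :=
  BddAbove.convolutionExistsAt L (hg.mono (image_subset_range _ _)) MeasurableSet.univ
    (subset_univ _) hf.integrableOn hgm

theorem mul_norm_convolution_le {v : G → ℝ} (hv0 : ∀ x, 0 ≤ v x)
    (hv : ∀ x y, v (x + y) ≤ v x * v y) {f₁ f₂ : G → ℝ} {g₁ g₂ : G → 𝕜}
    (hg₁ : ∀ x, v x * ‖g₁ x‖ ≤ f₁ x) (hg₂ : ∀ x, v x * ‖g₂ x‖ ≤ f₂ x) {x : G}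
    (hf : ConvolutionExistsAt f₁ f₂ x (mul ℝ ℝ) μ) :
    v x * ‖(g₁ ⋆[mul 𝕜 𝕜, μ] g₂) x‖ ≤ (f₁ ⋆[mul ℝ ℝ, μ] f₂) x := by
  simp only [convolution_def, mul_apply']
  calc v x * ‖∫ t, g₁ t * g₂ (x - t) ∂μ‖ ≤ v x * ∫ t, ‖g₁ t‖ * ‖g₂ (x - t)‖ ∂μ := by
        gcongr
        · exact hv0 x
        · simpa only [norm_mul] using
            norm_integral_le_integral_norm (fun t => g₁ t * g₂ (x - t))
    _ = ∫ t, v x * (‖g₁ t‖ * ‖g₂ (x - t)‖) ∂μ := (integral_const_mul _ _).symm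
    _ ≤ ∫ t, f₁ t * f₂ (x - t) ∂μ := by
        refine integral_mono_of_nonneg (.of_forall fun t => by positivity [hv0 x]) hf
          (.of_forall fun t => ?_)
        have hvx : v x ≤ v t * v (x - t) := by simpa using hv t (x - t)
        calc v x * (‖g₁ t‖ * ‖g₂ (x - t)‖)
            ≤ v t * v (x - t) * (‖g₁ t‖ * ‖g₂ (x - t)‖) := by gcongr
          _ = (v t * ‖g₁ t‖) * (v (x - t) * ‖g₂ (x - t)‖) := by ring
          _ ≤ f₁ t * f₂ (x - t) :=
            mul_le_mul (hg₁ t) (hg₂ _) (mul_nonneg (hv0 _) (norm_nonneg _))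
              ((mul_nonneg (hv0 t) (norm_nonneg _)).trans (hg₁ t))

end Convolution

section IteratedConv

variable {𝕜 G : Type*} [RCLike 𝕜] [NormedAddCommGroup G] [MeasurableSpace G] (μ : Measure G)

noncomputable def iteratedConv (f : G → 𝕜) : ℕ → G → 𝕜
  | 0 => f
  | k + 1 => f ⋆[mul 𝕜 𝕜, μ] iteratedConv f k

variable {μ} {f : G → 𝕜}

theorem integrable_iteratedConv [BorelSpace G] [SecondCountableTopology G] [SFinite μ]
    [μ.IsAddRightInvariant] (hf : Integrable f μ) (k : ℕ) :
    Integrable (iteratedConv μ f k) μ := by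
  induction k with
  | zero => exact hf
  | succ k ih => exact hf.integrable_convolution _ ih

theorem bddAbove_iteratedConv (hf : Integrable f μ) (hfb : BddAbove (range fun x => ‖f x‖))
    (k : ℕ) : BddAbove (range fun x => ‖iteratedConv μ f k x‖) := by
  induction k with
  | zero => exact hfb
  | succ k ih => exact bddAbove_range_norm_convolution _ hf ih

theorem continuous_iteratedConv [BorelSpace G] (hf : Integrable f μ)
    (hfb : BddAbove (range fun x => ‖f x‖)) (hfc : Continuous f) (k : ℕ) :
    Continuous (iteratedConv μ f k) := by
  induction k with
  | zero => exact hfc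
  | succ k ih =>
    exact (bddAbove_iteratedConv hf hfb k).continuous_convolution_right_of_integrable _ hf ih

theorem mul_norm_iteratedConv_le [BorelSpace G] [SecondCountableTopology G] [SFinite μ]
    [μ.IsAddLeftInvariant] [μ.IsAddRightInvariant] {v : G → ℝ} (hv0 : ∀ x, 0 ≤ v x)
    (hv : ∀ x y, v (x + y) ≤ v x * v y) {g : G → ℝ} (hg : Integrable g μ)
    (hgb : BddAbove (range fun x => ‖g x‖)) (hfg : ∀ x, v x * ‖f x‖ ≤ g x) (k : ℕ) (x : G) :
    v x * ‖iteratedConv μ f k x‖ ≤ iteratedConv μ g k x := by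
  induction k generalizing x with
  | zero => exact hfg x
  | succ k ih =>
    exact mul_norm_convolution_le hv0 hv hfg ih <| hg.convolutionExistsAt_of_bddAbove _
      (bddAbove_iteratedConv hg hgb k) (integrable_iteratedConv hg k).aestronglyMeasurable x

end IteratedConv

theorem iteratedSelfConv_eq_iteratedConv {n : ℕ} (f : EuclideanSpace ℝ (Fin n) → ℝ) (k : ℕ) :
    iteratedSelfConv f k = iteratedConv volume f k := by
  induction k with
  | zero => rfl
  | succ k ih => simp only [iteratedSelfConv, iteratedConv, ih]

section Fourier

variable {E F R : Type*} [NormedAddCommGroup E] [InnerProductSpace ℝ E] [FiniteDimensional ℝ E]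
  [MeasurableSpace E] [BorelSpace E]

theorem Real.fourierInv_mul_convolution_eq [NormedRing R] [NormedSpace ℂ R]
    [IsScalarTower ℂ R R] [SMulCommClass ℂ R R] [CompleteSpace R] {f₁ f₂ : E → R}
    (hf₁ : Integrable f₁) (hf₂ : Integrable f₂) (x : E) :
    𝓕⁻ (f₁ ⋆[mul ℂ R] f₂) x = 𝓕⁻ f₁ x * 𝓕⁻ f₂ x := by
  simp only [Real.fourierInv_eq_fourier_neg, Real.fourier_mul_convolution_eq hf₁ hf₂]

theorem fourierInv_pow_succ_eq_iteratedConv {g : E → ℂ} (hg : Integrable g) (k : ℕ) (x : E) :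
    𝓕⁻ g x ^ (k + 1) = 𝓕⁻ (iteratedConv volume g k) x := by
  induction k with
  | zero => rw [pow_one]; rfl
  | succ k ih =>
    rw [pow_succ', ih, iteratedConv,
      Real.fourierInv_mul_convolution_eq hg (integrable_iteratedConv hg k)]

theorem Continuous.fourier_fourierInv_eq_of_integrable_fourierInv [NormedAddCommGroup F]
    [NormedSpace ℂ F] [CompleteSpace F] {g : E → F} (hgc : Continuous g) (hg : Integrable g)
    (hg' : Integrable (𝓕⁻ g)) : 𝓕 (𝓕⁻ g) = g := by
  refine hgc.fourier_fourierInv_eq hg ?_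
  have h : 𝓕 g = fun w => 𝓕⁻ g (-w) :=
    funext fun w => by rw [Real.fourierInv_eq_fourier_neg, neg_neg]
  exact h ▸ hg'.comp_neg

theorem Real.fourier_eq_zero_of_not_integrable [NormedAddCommGroup F] [NormedSpace ℂ F]
    {f : E → F} (hf : ¬ Integrable f) : 𝓕 f = 0 := by
  ext ξ
  rw [Real.fourier_eq, integral_undef]
  · rfl
  rwa [Real.fourierIntegral_convergent_iff]

end Fourier

theorem Real.exp_mul_norm_add_le {E : Type*} [SeminormedAddCommGroup E] {σ : ℝ} (hσ : 0 ≤ σ)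
    (x y : E) : Real.exp (σ * ‖x + y‖) ≤ Real.exp (σ * ‖x‖) * Real.exp (σ * ‖y‖) := by
  rw [← Real.exp_add, ← mul_add]
  gcongr
  exact norm_add_le x y

theorem weighted_power_le_iterated_conv_general (n : ℕ) (p : ℕ) (hp : 1 ≤ p)
    (σ : ℝ) (hσ : 0 ≤ σ) (U : SchwartzMap (EuclideanSpace ℝ (Fin n)) ℂ)
    (W : EuclideanSpace ℝ (Fin n) → ℂ)
    (hW : W = FourierTransformInv.fourierInv
        (fun ξ => ((Real.exp (-(σ * ‖ξ‖)) : ℝ) : ℂ) *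
          FourierTransform.fourier (fun x => U x) ξ)) :
    eLpNorm (fun ξ => ((Real.exp (σ * ‖ξ‖) : ℝ) : ℂ) *
        FourierTransform.fourier (fun x => (W x) ^ p) ξ) 2 volume
      ≤ eLpNorm
          (iteratedSelfConv (fun ξ => ‖FourierTransform.fourier (fun x => U x) ξ‖) (p - 1))
          2 volume := by
  obtain ⟨m, rfl⟩ : ∃ m, p = m + 1 := ⟨p - 1, by omega⟩
  set u := 𝓕 (fun x => U x)
  set g := fun ξ => ((Real.exp (-(σ * ‖ξ‖)) : ℝ) : ℂ) * u ξ
  have hui : Integrable u := (𝓕 U).integrable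
  have hub : BddAbove (range fun ξ => ‖u ξ‖) :=
    ⟨_, forall_mem_range.2 ((𝓕 U).norm_le_seminorm ℝ)⟩
  have hweight ξ : Real.exp (σ * ‖ξ‖) * ‖g ξ‖ = ‖u ξ‖ := by
    rw [norm_mul, Complex.norm_real, Real.norm_of_nonneg (Real.exp_pos _).le, ← mul_assoc,
      ← Real.exp_add, add_neg_cancel, Real.exp_zero, one_mul]
  have hg_le ξ : ‖g ξ‖ ≤ ‖u ξ‖ :=
    (le_mul_of_one_le_left (norm_nonneg _) (Real.one_le_exp (by positivity))).trans_eq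
      (hweight ξ)
  have hgc : Continuous g := by
    have : Continuous u := (𝓕 U).continuous
    fun_prop
  have hgi : Integrable g := hui.mono hgc.aestronglyMeasurable (.of_forall hg_le)
  have hgb : BddAbove (range fun ξ => ‖g ξ‖) := hub.range_mono _ hg_le
  have hWp : (fun x => W x ^ (m + 1)) = 𝓕⁻ (iteratedConv volume g m) :=
    funext fun x => hW ▸ fourierInv_pow_succ_eq_iteratedConv hgi m x
  rw [hWp, Nat.add_sub_cancel, iteratedSelfConv_eq_iteratedConv]
  by_cases hint : Integrable (𝓕⁻ (iteratedConv volume g m))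
  · rw [(continuous_iteratedConv hgi hgb hgc m).fourier_fourierInv_eq_of_integrable_fourierInv
      (integrable_iteratedConv hgi m) hint]
    refine eLpNorm_mono_real fun ξ => ?_
    rw [norm_mul, Complex.norm_real, Real.norm_of_nonneg (Real.exp_pos _).le]
    exact mul_norm_iteratedConv_le (fun _ => (Real.exp_pos _).le) (Real.exp_mul_norm_add_le hσ)
      hui.norm (by simpa only [norm_norm] using hub) (fun ξ => (hweight ξ).le) m ξ
  · rw [Real.fourier_eq_zero_of_not_integrable hint]
    simp

/-- The central step (NonlinearEst1): with `W = 𝓕⁻¹(e^{−σ|ξ|} Û)`, the weighted norm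
`‖e^{σ|·|} 𝓕(W^p)‖_{L²}` is dominated by the `L²` norm of the `p`-fold convolution
`|Û| ∗ ⋯ ∗ |Û|`, both sides taken as values in `[0,∞]`. -/
theorem weighted_power_le_iterated_conv (n : ℕ) (hn : 1 ≤ n) (p : ℕ) (hp : 1 ≤ p)
    (σ : ℝ) (hσ : 0 ≤ σ) (U : SchwartzMap (EuclideanSpace ℝ (Fin n)) ℂ)
    (W : EuclideanSpace ℝ (Fin n) → ℂ)
    (hW : W = FourierTransformInv.fourierInv
        (fun ξ => ((Real.exp (-(σ * ‖ξ‖)) : ℝ) : ℂ) *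
          FourierTransform.fourier (fun x => U x) ξ)) :
    eLpNorm (fun ξ => ((Real.exp (σ * ‖ξ‖) : ℝ) : ℂ) *
        FourierTransform.fourier (fun x => (W x) ^ p) ξ) 2 volume
      ≤ eLpNorm
          (iteratedSelfConv (fun ξ => ‖FourierTransform.fourier (fun x => U x) ξ‖) (p - 1))
          2 volume :=
  weighted_power_le_iterated_conv_general n p hp σ hσ U W hW
end
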